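/- (Kubo–Mori information matrix of a PQC with thermal-state initialization.) Let D_i = ∂_i ρ(φ) and define I^{KM}_{ij}(φ) = Σ_{k,ℓ<d} c(λ_k, λ_ℓ) ⟨k| D_i |ℓ⟩ ⟨ℓ| D_j |k⟩, where c(a,b) = (ln a − ln b)/(a − b) for a ≠ b and c(a,a) = 1/a, |k⟩ = U(φ)|k̃⟩, and (|k̃⟩, λ_k) is the eigensystem of ρ. Then for all i, j ∈ {1,…,J}: I^{KM}_{ij}(φ) = Tr[[[A_j, G], A_i] ρ], where A_j = U_{R_j}† H_j U_{R_j} and [X,Y] = XY − YX. -/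

import Mathlib

open Matrix

noncomputable section

attribute [local instance] Matrix.linftyOpNormedAddCommGroup Matrix.linftyOpNormedSpace

/-- Square complex matrices of size `d`. -/
abbrev Mat (d : ℕ) := Matrix (Fin d) (Fin d) ℂ

/-- Descending product `f (a + n - 1) * ⋯ * f (a + 1) * f a` (empty product is `1`). -/
def descProd {d : ℕ} (f : ℕ → Mat d) (a : ℕ) : ℕ → Mat d
  | 0 => 1
  | n + 1 => f (a + n) * descProd f a n

/-- The `j`-th layer `U_j(φ_j) = exp (−i φ_j H_j) V_j`. -/
def layer {d : ℕ} (H V : ℕ → Mat d) (φ : ℕ → ℝ) (j : ℕ) : Mat d :=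
  NormedSpace.exp ((-(Complex.I * (φ j : ℂ))) • H j) * V j

/-- `U_{R_j} = U_j ⋯ U_1`. -/
def UR {d : ℕ} (H V : ℕ → Mat d) (φ : ℕ → ℝ) (j : ℕ) : Mat d :=
  descProd (layer H V φ) 1 j

/-- `U_{L_j} = U_J ⋯ U_j`. -/
def UL {d : ℕ} (H V : ℕ → Mat d) (φ : ℕ → ℝ) (J j : ℕ) : Mat d :=
  descProd (layer H V φ) j (J + 1 - j)

/-- The full layered circuit `U(φ) = U_J ⋯ U_1`. -/
def Ufull {d : ℕ} (H V : ℕ → Mat d) (φ : ℕ → ℝ) (J : ℕ) : Mat d :=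
  UR H V φ J

/-- `B_j = U_{L_{j+1}} H_j U_{L_{j+1}}†`. -/
def Bmat {d : ℕ} (H V : ℕ → Mat d) (φ : ℕ → ℝ) (J j : ℕ) : Mat d :=
  UL H V φ J (j + 1) * H j * (UL H V φ J (j + 1))ᴴ

/-- `A_j = U_{R_j}† H_j U_{R_j}`. -/
def Amat {d : ℕ} (H V : ℕ → Mat d) (φ : ℕ → ℝ) (j : ℕ) : Mat d :=
  (UR H V φ j)ᴴ * H j * UR H V φ j

/-- The thermal state `ρ = e^{−G}/Z`. -/
def thermal {d : ℕ} (G : Mat d) (Z : ℝ) : Mat d :=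
  (Z : ℂ)⁻¹ • NormedSpace.exp (-G)

/-- The parameterized state `ρ(φ) = U(φ) ρ U(φ)†`. -/
def rhoFun {d : ℕ} (H V : ℕ → Mat d) (J : ℕ) (G : Mat d) (Z : ℝ) (φ : ℕ → ℝ) : Mat d :=
  Ufull H V φ J * thermal G Z * (Ufull H V φ J)ᴴ

/-- The sesquilinear form `⟨u| M |v⟩`, conjugate-linear in `u`. -/
def braket {d : ℕ} (u : Fin d → ℂ) (M : Mat d) (v : Fin d → ℂ) : ℂ :=
  star u ⬝ᵥ M.mulVec v

/-- The Kubo–Mori coefficient `c(a,b) = (ln a − ln b)/(a − b)` for `a ≠ b`, `c(a,a) = 1/a`. -/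
def kmCoeff (a b : ℝ) : ℝ :=
  if a = b then 1 / a else (Real.log a - Real.log b) / (a - b)

/-!
Differentiating `ρ(φ) = U ρ U†` in `φ_i` brings down `-i H_i` at the `i`-th layer, so
`∂_i ρ(φ) = -i U [A_i, ρ] U†` and, in the rotated eigenbasis,
`⟨k|∂_i ρ|l⟩ = -i (λ_l - λ_k) ⟨k̃|A_i|l̃⟩`.
The Kubo–Mori weight satisfies `c(λ_k, λ_l) (λ_k - λ_l) = ln λ_k - ln λ_l = μ_l - μ_k`, so the
`(k, l)` term of `I^{KM}_{ij}` is `(λ_l - λ_k) (μ_k - μ_l) ⟨k̃|A_i|l̃⟩ ⟨l̃|A_j|k̃⟩`. This is the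
`(k, l)` term of the eigenbasis expansion of `Tr[[A_i, ρ] [A_j, G]]`, which equals
`Tr[[[A_j, G], A_i] ρ]` by cyclicity of the trace.
-/

attribute [local instance] Matrix.linftyOpNormedRing Matrix.linftyOpNormedAlgebra

section Lemmas

variable {d : ℕ} {H V : ℕ → Mat d}

theorem exp_mulVec_of_mulVec_eq_smul {A : Mat d} {w : Fin d → ℂ} {c : ℂ}
    (h : A *ᵥ w = c • w) : NormedSpace.exp A *ᵥ w = Complex.exp c • w := by
  have hpow (n : ℕ) : A ^ n *ᵥ w = c ^ n • w := by
    induction n with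
    | zero => simp
    | succ n ih => rw [pow_succ, ← mulVec_mulVec, h, mulVec_smul, ih, smul_smul, pow_succ']
  have hA := (NormedSpace.exp_series_hasSum_exp' (𝕂 := ℂ) A).map
    (mulVec.addMonoidHomLeft w) (continuous_id.matrix_mulVec continuous_const)
  refine hA.unique ?_
  rw [Complex.exp_eq_exp_ℂ]
  convert (NormedSpace.exp_series_hasSum_exp' (𝕂 := ℂ) c).smul_const w using 2 with n
  simp [mulVec.addMonoidHomLeft, smul_mulVec, hpow, smul_smul]

theorem thermal_mulVec_of_mulVec_eq_smul {G : Mat d} {w : Fin d → ℂ} {μ : ℝ}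
    (h : G *ᵥ w = (μ : ℂ) • w) (Z : ℝ) :
    thermal G Z *ᵥ w = ((Real.exp (-μ) / Z : ℝ) : ℂ) • w := by
  have hneg : -G *ᵥ w = (-μ : ℂ) • w := by rw [neg_mulVec, h, neg_smul]
  rw [thermal, smul_mulVec, exp_mulVec_of_mulVec_eq_smul hneg, smul_smul]
  push_cast
  ring_nf

theorem thermal_isHermitian {G : Mat d} (hG : G.IsHermitian) (Z : ℝ) :
    (thermal G Z).IsHermitian := by
  rw [IsHermitian, thermal, conjTranspose_smul, ← exp_conjTranspose, conjTranspose_neg, hG.eq]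
  simp [← Complex.ofReal_inv]

theorem braket_smul (x y : Fin d → ℂ) (c : ℂ) (M : Mat d) :
    braket x (c • M) y = c * braket x M y := by
  rw [braket, smul_mulVec, dotProduct_smul, smul_eq_mul, braket]

theorem braket_mulVec_mulVec (U M : Mat d) (x y : Fin d → ℂ) :
    braket (U *ᵥ x) M (U *ᵥ y) = braket x (Uᴴ * M * U) y := by
  rw [braket, braket, star_mulVec, mulVec_mulVec, ← dotProduct_mulVec, mulVec_mulVec,
    Matrix.mul_assoc]

theorem braket_mulVec_conj_of_mem_unitaryGroup {U : Mat d} (hU : U ∈ unitaryGroup (Fin d) ℂ)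
    (C : Mat d) (x y : Fin d → ℂ) : braket (U *ᵥ x) (U * C * Uᴴ) (U *ᵥ y) = braket x C y := by
  have hUU : Uᴴ * U = 1 := mem_unitaryGroup_iff'.mp hU
  rw [braket_mulVec_mulVec, ← Matrix.mul_assoc, ← Matrix.mul_assoc, hUU, Matrix.one_mul,
    Matrix.mul_assoc, hUU, Matrix.mul_one]

theorem braket_commutator_of_mulVec_eq_smul {N : Mat d} (hN : N.IsHermitian) {x y : Fin d → ℂ}
    {a b : ℝ} (hx : N *ᵥ x = (a : ℂ) • x) (hy : N *ᵥ y = (b : ℂ) • y) (A : Mat d) :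
    braket x (A * N - N * A) y = (b - a) * braket x A y := by
  have hx' : star x ᵥ* N = (a : ℂ) • star x := by
    rw [← hN.eq, ← star_mulVec, hx, star_smul, Complex.star_def, Complex.conj_ofReal]
  rw [braket, sub_mulVec, dotProduct_sub, ← mulVec_mulVec, hy, ← mulVec_mulVec,
    dotProduct_mulVec (star x) N, hx', mulVec_smul, dotProduct_smul, smul_dotProduct, braket]
  simp only [smul_eq_mul]
  ring

theorem conjTranspose_mul_mul_apply (W X : Mat d) (k l : Fin d) :
    (Wᴴ * X * W) k l = braket (fun a => W a k) X (fun a => W a l) := by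
  simp only [mul_apply, braket, dotProduct, mulVec, conjTranspose_apply, Finset.sum_mul,
    Finset.mul_sum, Pi.star_apply]
  rw [Finset.sum_comm]
  exact Finset.sum_congr rfl fun _ _ => Finset.sum_congr rfl fun _ _ => by ring

theorem trace_mul_eq_sum_braket {v : Fin d → Fin d → ℂ}
    (hv : ∀ k l, star (v k) ⬝ᵥ v l = if k = l then 1 else 0) (X Y : Mat d) :
    (X * Y).trace = ∑ k, ∑ l, braket (v k) X (v l) * braket (v l) Y (v k) := by
  set W : Mat d := of fun a b => v b a
  have hWW : Wᴴ * W = 1 := by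
    ext k l
    simpa [W, mul_apply, dotProduct, one_apply] using hv k l
  have hWW' : W * Wᴴ = 1 := mul_eq_one_comm.mp hWW
  have hcancel (Z : Mat d) : W * (Wᴴ * Z) = Z := by
    rw [← Matrix.mul_assoc, hWW', Matrix.one_mul]
  calc (X * Y).trace = (Wᴴ * X * W * (Wᴴ * Y * W)).trace := by
        simp only [Matrix.mul_assoc, hcancel]
        rw [trace_mul_comm Wᴴ]
        simp only [Matrix.mul_assoc, hWW', Matrix.mul_one]
    _ = ∑ k, ∑ l, (Wᴴ * X * W) k l * (Wᴴ * Y * W) l k :=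
        Finset.sum_congr rfl fun _ _ => mul_apply
    _ = _ := by simp only [conjTranspose_mul_mul_apply]; rfl

theorem trace_commutator_mul_eq (C A ρ : Mat d) :
    ((C * A - A * C) * ρ).trace = ((A * ρ - ρ * A) * C).trace := by
  rw [sub_mul, sub_mul, trace_sub, trace_sub, trace_mul_cycle A ρ C, trace_mul_cycle A C ρ]

theorem exp_smul_mem_unitaryGroup {A : Mat d} (hA : A.IsHermitian) {c : ℂ} (hc : star c = -c) :
    NormedSpace.exp (c • A) ∈ unitaryGroup (Fin d) ℂ := by
  have hstar : star (NormedSpace.exp (c • A)) = NormedSpace.exp ((-c) • A) := by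
    rw [star_eq_conjTranspose, ← exp_conjTranspose, conjTranspose_smul, hA.eq, hc]
  rw [mem_unitaryGroup_iff', hstar,
    ← Matrix.exp_add_of_commute _ _ ((Commute.refl A).smul_left _ |>.smul_right _),
    ← add_smul, neg_add_cancel, zero_smul, NormedSpace.exp_zero]

theorem descProd_mem {S : Submonoid (Mat d)} {f : ℕ → Mat d} (hf : ∀ m, f m ∈ S)
    (a n : ℕ) : descProd f a n ∈ S := by
  induction n with
  | zero => exact S.one_mem
  | succ n ih => exact S.mul_mem (hf _) ih

theorem UR_mem_unitaryGroup (hH : ∀ j, (H j).IsHermitian)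
    (hV : ∀ j, V j ∈ unitaryGroup (Fin d) ℂ) (φ : ℕ → ℝ) (j : ℕ) :
    UR H V φ j ∈ unitaryGroup (Fin d) ℂ :=
  descProd_mem (fun m => Submonoid.mul_mem _
    (exp_smul_mem_unitaryGroup (hH m) (by simp)) (hV m)) _ _

theorem descProd_add (f : ℕ → Mat d) (a m n : ℕ) :
    descProd f a (m + n) = descProd f (a + n) m * descProd f a n := by
  induction m with
  | zero => simp [descProd]
  | succ m ih => rw [Nat.add_right_comm, descProd, descProd, ih, Matrix.mul_assoc,
      Nat.add_assoc, Nat.add_comm n]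

theorem descProd_congr {f g : ℕ → Mat d} {a n : ℕ} (h : ∀ m < n, f (a + m) = g (a + m)) :
    descProd f a n = descProd g a n := by
  induction n with
  | zero => rfl
  | succ n ih =>
    rw [descProd, descProd, h n n.lt_succ_self, ih fun m hm => h m (hm.trans n.lt_succ_self)]

theorem UR_eq_layer_mul {i : ℕ} (hi : 1 ≤ i) (φ : ℕ → ℝ) :
    UR H V φ i = layer H V φ i * UR H V φ (i - 1) := by
  obtain ⟨i, rfl⟩ := Nat.exists_eq_add_of_le hi
  rw [UR, add_tsub_cancel_left, Nat.add_comm, descProd, Nat.add_comm, UR]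

theorem Ufull_eq_descProd_mul_UR {i J : ℕ} (hiJ : i ≤ J) (φ : ℕ → ℝ) :
    Ufull H V φ J = descProd (layer H V φ) (i + 1) (J - i) * UR H V φ i := by
  rw [Ufull, UR, UR, Nat.add_comm i 1, ← descProd_add, Nat.sub_add_cancel hiJ]

theorem layer_update_of_ne (φ : ℕ → ℝ) {i m : ℕ} (h : m ≠ i) (x : ℝ) :
    layer H V (Function.update φ i x) m = layer H V φ m := by
  rw [layer, layer, Function.update_of_ne h]

theorem neg_I_mul_ofReal_smul (x : ℝ) (A : Mat d) :
    (-(Complex.I * (x : ℂ))) • A = x • ((-Complex.I) • A) := by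
  rw [← smul_assoc, Complex.real_smul, mul_neg, mul_comm]

theorem Ufull_update_eq {i J : ℕ} (hi : 1 ≤ i) (hiJ : i ≤ J) (φ : ℕ → ℝ) (x : ℝ) :
    Ufull H V (Function.update φ i x) J = descProd (layer H V φ) (i + 1) (J - i) *
      NormedSpace.exp (x • ((-Complex.I) • H i)) * (V i * UR H V φ (i - 1)) := by
  rw [Ufull_eq_descProd_mul_UR hiJ, UR_eq_layer_mul hi, layer, Function.update_self,
    neg_I_mul_ofReal_smul, UR, UR, descProd_congr fun m _ => layer_update_of_ne φ (by omega) x,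
    descProd_congr (n := i - 1) fun m _ => layer_update_of_ne φ (by omega) x]
  simp only [Matrix.mul_assoc]

/- The `ContinuousStar` instance is passed by hand: `Mat d` carries the topology of the local
operator norm, under which instance search does not find it. -/
theorem HasDerivAt.matrix_conjTranspose {U : ℝ → Mat d} {U' : Mat d} {t : ℝ}
    (h : HasDerivAt U U' t) : HasDerivAt (fun x => (U x)ᴴ) U'ᴴ t := by
  refine @HasDerivAt.star ℝ _ _ (Mat d) _ _ _ _ ?_ _ _ _ _ h
  exact ⟨continuous_id.matrix_conjTranspose⟩

theorem HasDerivAt.mul_mul_conjTranspose {U : ℝ → Mat d} {U₀ A : Mat d} {t : ℝ}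
    (hU : HasDerivAt U (U₀ * ((-Complex.I) • A)) t) (hU₀ : U t = U₀) (hA : A.IsHermitian)
    (ρ : Mat d) :
    HasDerivAt (fun x => U x * ρ * (U x)ᴴ)
      ((-Complex.I) • (U₀ * (A * ρ - ρ * A) * U₀ᴴ)) t := by
  refine ((hU.mul_const ρ).mul hU.matrix_conjTranspose).congr_deriv ?_
  rw [hU₀, conjTranspose_mul, conjTranspose_smul, hA.eq]
  simp only [Matrix.mul_sub, Matrix.sub_mul, Matrix.mul_smul, Matrix.smul_mul, smul_sub,
    Matrix.mul_assoc, star_neg, Complex.star_def, Complex.conj_I, neg_neg, neg_smul, neg_mul,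
    mul_neg]
  abel

theorem hasDerivAt_Ufull_update (hV : ∀ j, V j ∈ unitaryGroup (Fin d) ℂ)
    (hH : ∀ j, (H j).IsHermitian) {i J : ℕ} (hi : 1 ≤ i) (hiJ : i ≤ J) (φ : ℕ → ℝ) :
    HasDerivAt (fun x => Ufull H V (Function.update φ i x) J)
      (Ufull H V φ J * ((-Complex.I) • Amat H V φ i)) (φ i) := by
  have hW : UR H V φ i =
      NormedSpace.exp (φ i • ((-Complex.I) • H i)) * (V i * UR H V φ (i - 1)) := by
    rw [UR_eq_layer_mul hi, layer, neg_I_mul_ofReal_smul, Matrix.mul_assoc]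
  have hWW (X : Mat d) : UR H V φ i * ((UR H V φ i)ᴴ * X) = X := by
    rw [← Matrix.mul_assoc, ← star_eq_conjTranspose,
      mem_unitaryGroup_iff.mp (UR_mem_unitaryGroup hH hV φ i), Matrix.one_mul]
  simp_rw [Ufull_update_eq hi hiJ]
  refine (((hasDerivAt_exp_smul_const' ((-Complex.I) • H i) (φ i)).const_mul _).mul_const
    _).congr_deriv ?_
  calc _ = (-Complex.I) • (descProd (layer H V φ) (i + 1) (J - i) * H i * UR H V φ i) := by
        simp only [hW, smul_mul_assoc, mul_smul_comm, Matrix.mul_assoc]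
        rfl
    _ = _ := by
        rw [Ufull_eq_descProd_mul_UR hiJ, Amat]
        simp only [mul_smul_comm, Matrix.mul_assoc, hWW]

theorem hasDerivAt_rhoFun_update (hV : ∀ j, V j ∈ unitaryGroup (Fin d) ℂ)
    (hH : ∀ j, (H j).IsHermitian) {i J : ℕ} (hi : 1 ≤ i) (hiJ : i ≤ J) (G : Mat d) (Z : ℝ)
    (φ : ℕ → ℝ) :
    HasDerivAt (fun x => rhoFun H V J G Z (Function.update φ i x))
      ((-Complex.I) • (Ufull H V φ J *
        (Amat H V φ i * thermal G Z - thermal G Z * Amat H V φ i) * (Ufull H V φ J)ᴴ)) (φ i) :=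
  HasDerivAt.mul_mul_conjTranspose (hasDerivAt_Ufull_update hV hH hi hiJ φ)
    (by rw [Function.update_eq_self]) (isHermitian_conjTranspose_mul_mul _ (hH i)) _

end Lemmas

theorem kmCoeff_mul_sub (a b : ℝ) : kmCoeff a b * (a - b) = Real.log a - Real.log b := by
  unfold kmCoeff
  split_ifs with h
  · simp [h]
  · exact div_mul_cancel₀ _ (sub_ne_zero.mpr h)

theorem log_exp_neg_div {Z : ℝ} (hZ : Z ≠ 0) (μ : ℝ) :
    Real.log (Real.exp (-μ) / Z) = -μ - Real.log Z := by
  rw [Real.log_div (Real.exp_ne_zero _) hZ, Real.log_exp]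

theorem kubo_mori_pqc_general {d J : ℕ}
    (H V G : _) (hH : ∀ j, (H j : Mat d).IsHermitian)
    (hV : ∀ j, V j ∈ Matrix.unitaryGroup (Fin d) ℂ)
    (hG : (G : Mat d).IsHermitian)
    (Z : ℝ) (hZpos : 0 < Z)
    (v : Fin d → Fin d → ℂ)
    (hortho : ∀ k l, star (v k) ⬝ᵥ v l = if k = l then 1 else 0)
    (μ : Fin d → ℝ) (hGv : ∀ k, G.mulVec (v k) = (μ k : ℂ) • v k)
    (lam : Fin d → ℝ) (hlam : ∀ k, lam k = Real.exp (-(μ k)) / Z)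
    (φ : ℕ → ℝ) (i j : ℕ) (hi1 : 1 ≤ i) (hiJ : i ≤ J) (hj1 : 1 ≤ j) (hjJ : j ≤ J)
    (Di Dj : Mat d)
    (hDi : HasDerivAt (fun x : ℝ => rhoFun H V J G Z (Function.update φ i x)) Di (φ i))
    (hDj : HasDerivAt (fun x : ℝ => rhoFun H V J G Z (Function.update φ j x)) Dj (φ j)) :
    ∑ k : Fin d, ∑ l : Fin d,
        ((kmCoeff (lam k) (lam l) : ℝ) : ℂ) *
          braket ((Ufull H V φ J).mulVec (v k)) Di ((Ufull H V φ J).mulVec (v l)) *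
          braket ((Ufull H V φ J).mulVec (v l)) Dj ((Ufull H V φ J).mulVec (v k)) =
      (((Amat H V φ j * G - G * Amat H V φ j) * Amat H V φ i -
          Amat H V φ i * (Amat H V φ j * G - G * Amat H V φ j)) *
        thermal G Z).trace := by
  have hρ (k : Fin d) : thermal G Z *ᵥ v k = (lam k : ℂ) • v k := by
    rw [hlam]; exact thermal_mulVec_of_mulVec_eq_smul (hGv k) Z
  have hρ_comm (k l : Fin d) :=
    braket_commutator_of_mulVec_eq_smul (thermal_isHermitian hG Z) (hρ k) (hρ l)
  have hU : Ufull H V φ J ∈ unitaryGroup (Fin d) ℂ := UR_mem_unitaryGroup hH hV φ J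
  have hD {n : ℕ} (hn : 1 ≤ n) (hnJ : n ≤ J) {D : Mat d}
      (hD : HasDerivAt (fun x => rhoFun H V J G Z (Function.update φ n x)) D (φ n))
      (k l : Fin d) : braket (Ufull H V φ J *ᵥ v k) D (Ufull H V φ J *ᵥ v l) =
        -Complex.I * ((lam l - lam k) * braket (v k) (Amat H V φ n) (v l)) := by
    rw [hD.unique (hasDerivAt_rhoFun_update hV hH hn hnJ G Z φ), braket_smul,
      braket_mulVec_conj_of_mem_unitaryGroup hU, hρ_comm]
  rw [trace_commutator_mul_eq, trace_mul_eq_sum_braket hortho]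
  refine Finset.sum_congr rfl fun k _ => Finset.sum_congr rfl fun l _ => ?_
  have hc : (kmCoeff (lam k) (lam l) : ℂ) * (lam k - lam l) = μ l - μ k := by
    rw [← Complex.ofReal_sub, ← Complex.ofReal_mul, kmCoeff_mul_sub, hlam, hlam,
      log_exp_neg_div hZpos.ne', log_exp_neg_div hZpos.ne']
    push_cast
    ring
  rw [hD hi1 hiJ hDi, hD hj1 hjJ hDj, hρ_comm,
    braket_commutator_of_mulVec_eq_smul hG (hGv l) (hGv k)]
  set a := braket (v k) (Amat H V φ i) (v l)
  set b := braket (v l) (Amat H V φ j) (v k)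
  linear_combination ((lam k - lam l) * a * b : ℂ) * hc +
    ((kmCoeff (lam k) (lam l) : ℂ) * (lam l - lam k) * (lam k - lam l) * a * b) * Complex.I_mul_I

/-- Kubo–Mori information matrix of a PQC with thermal-state initialization:
`I^{KM}_{ij}(φ) = Tr[[[A_j, G], A_i] ρ]`. -/
theorem kubo_mori_pqc {d J : ℕ} (hd : 1 ≤ d)
    (H V G : _) (hH : ∀ j, (H j : Mat d).IsHermitian)
    (hV : ∀ j, V j ∈ Matrix.unitaryGroup (Fin d) ℂ)
    (hG : (G : Mat d).IsHermitian)
    (Z : ℝ) (hZpos : 0 < Z) (hZ : (NormedSpace.exp (-G)).trace = (Z : ℂ))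
    (v : Fin d → Fin d → ℂ)
    (hortho : ∀ k l, star (v k) ⬝ᵥ v l = if k = l then 1 else 0)
    (μ : Fin d → ℝ) (hGv : ∀ k, G.mulVec (v k) = (μ k : ℂ) • v k)
    (lam : Fin d → ℝ) (hlam : ∀ k, lam k = Real.exp (-(μ k)) / Z)
    (φ : ℕ → ℝ) (i j : ℕ) (hi1 : 1 ≤ i) (hiJ : i ≤ J) (hj1 : 1 ≤ j) (hjJ : j ≤ J)
    (Di Dj : Mat d)
    (hDi : HasDerivAt (fun x : ℝ => rhoFun H V J G Z (Function.update φ i x)) Di (φ i))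
    (hDj : HasDerivAt (fun x : ℝ => rhoFun H V J G Z (Function.update φ j x)) Dj (φ j)) :
    ∑ k : Fin d, ∑ l : Fin d,
        ((kmCoeff (lam k) (lam l) : ℝ) : ℂ) *
          braket ((Ufull H V φ J).mulVec (v k)) Di ((Ufull H V φ J).mulVec (v l)) *
          braket ((Ufull H V φ J).mulVec (v l)) Dj ((Ufull H V φ J).mulVec (v k)) =
      (((Amat H V φ j * G - G * Amat H V φ j) * Amat H V φ i -
          Amat H V φ i * (Amat H V φ j * G - G * Amat H V φ j)) *
        thermal G Z).trace :=
  kubo_mori_pqc_general H V G hH hV hG Z hZpos v hortho μ hGv lam hlam φ i j hi1 hiJ hj1 hjJ Di Dj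
    hDi hDj
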